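/- For every integer k ≥ 2, the diamond-necklace N_k, which has order n = 4k, satisfies F_t(N_k) = 2k = n/2. -/

import Mathlib

/-- A set `T` of (colored) vertices is closed under the forcing rule: whenever a colored
vertex `v ∈ T` has the property that all of its neighbors outside `T` are equal to `w`
(i.e. `w` is its unique non-colored neighbor, if `w ∉ T`), then `w ∈ T`. -/
def ForcingClosed {V : Type*} (G : SimpleGraph V) (T : Set V) : Prop :=
  ∀ v ∈ T, ∀ w, G.Adj v w → (∀ u, G.Adj v u → u ∉ T → u = w) → w ∈ T

/-- `S` is a (zero) forcing set of `G`: iterating the forcing process starting from `S`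
colors all vertices; equivalently, every forcing-closed superset of `S` is everything. -/
def IsForcingSet {V : Type*} (G : SimpleGraph V) (S : Set V) : Prop :=
  ∀ T : Set V, S ⊆ T → ForcingClosed G T → ∀ v, v ∈ T

/-- `S` is a total forcing set of `G`: a forcing set whose induced subgraph has no
isolated vertex. -/
def IsTotalForcingSet {V : Type*} (G : SimpleGraph V) (S : Set V) : Prop :=
  IsForcingSet G S ∧ ∀ v ∈ S, ∃ w ∈ S, G.Adj v w

/-- The forcing number `F(G)`: minimum cardinality of a forcing set. -/
noncomputable def forcingNumber {V : Type*} (G : SimpleGraph V) : ℕ :=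
  sInf {n : ℕ | ∃ S : Set V, IsForcingSet G S ∧ S.ncard = n}

/-- The total forcing number `F_t(G)`: minimum cardinality of a total forcing set. -/
noncomputable def totalForcingNumber {V : Type*} (G : SimpleGraph V) : ℕ :=
  sInf {n : ℕ | ∃ S : Set V, IsTotalForcingSet G S ∧ S.ncard = n}

/-- The diamond-necklace `N_k`.  Its vertices are pairs `(i, j)` with `i : Fin k`
indexing the diamond and `j : Fin 4` the position inside diamond `D_i`, where
`j = 0, 1, 2, 3` correspond to the vertices `a_i, b_i, c_i, d_i` respectively and
`a_i b_i` is the missing edge of the diamond.  Two vertices in the same diamond are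
adjacent unless they are `a_i` and `b_i`, and in addition `a_i` is joined to `b_{i+1}`
(indices modulo `k`). -/
def diamondNecklace (k : ℕ) : SimpleGraph (Fin k × Fin 4) :=
  SimpleGraph.fromRel (fun p q =>
    (p.1 = q.1 ∧ ¬ ((p.2 = 0 ∧ q.2 = 1) ∨ (p.2 = 1 ∧ q.2 = 0))) ∨
    ((q.1 : ℕ) = ((p.1 : ℕ) + 1) % k ∧ p.2 = 0 ∧ q.2 = 1))

/-! In every diamond, `c_i` and `d_i` are adjacent twins whose neighbours all lie in the diamond.
No vertex outside `{c_i, d_i}` can ever force one of them, so a forcing set contains `c_i` or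
`d_i`, and a total one also contains a neighbour of it, again in diamond `i`: at least two
vertices per diamond. Conversely, all the `c_i` together with `a_0`, `b_1` and the `d_i` for
`i ≥ 2` form a total forcing set: once `a_i` and `b_{i+1}` are coloured, `b_{i+1}` forces
`d_{i+1}`, then `c_{i+1}` forces `a_{i+1}`, which forces `b_{i+2}`. -/

section Forcing

variable {V : Type*} {G : SimpleGraph V}

theorem ForcingClosed.mem_of_neighborSet_subset {T : Set V} (hT : ForcingClosed G T) {v w : V}
    (hv : v ∈ T) (hvw : G.Adj v w) (hN : G.neighborSet v ⊆ insert w T) : w ∈ T :=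
  hT v hv w hvw fun _ hu huT => (hN hu).resolve_right huT

theorem IsForcingSet.mem_or_mem_of_twins {S : Set V} (hS : IsForcingSet G S) {u v : V}
    (huv : u ≠ v) (htwin : ∀ x, x ≠ u → x ≠ v → (G.Adj x u ↔ G.Adj x v)) :
    u ∈ S ∨ v ∈ S := by
  by_contra! h
  have hclosed : ForcingClosed G {u, v}ᶜ := by
    intro x hx w hxw hforce
    by_contra hw
    replace hw : w = u ∨ w = v := by simpa [or_iff_not_imp_left] using hw
    replace hx : x ≠ u ∧ x ≠ v := by simpa [not_or] using hx
    have hxu : G.Adj x u := by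
      rcases hw with rfl | rfl
      exacts [hxw, (htwin x hx.1 hx.2).2 hxw]
    have hxv : G.Adj x v := (htwin x hx.1 hx.2).1 hxu
    exact huv ((hforce u hxu (by simp)).trans (hforce v hxv (by simp)).symm)
  exact hS _ (fun x hx => by rintro (rfl | rfl) <;> simp_all) hclosed u (by simp)

theorem totalForcingNumber_eq {S : Set V} (hS : IsTotalForcingSet G S)
    (hmin : ∀ S', IsTotalForcingSet G S' → S.ncard ≤ S'.ncard) :
    totalForcingNumber G = S.ncard :=
  IsLeast.csInf_eq ⟨⟨S, hS, rfl⟩, by rintro _ ⟨S', hS', rfl⟩; exact hmin S' hS'⟩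

end Forcing

theorem Set.mul_card_le_ncard_of_le_ncard_fiber {α ι : Type*} [Finite α] [Fintype ι]
    {S : Set α} (π : α → ι) (n : ℕ) (h : ∀ i, n ≤ (S ∩ π ⁻¹' {i}).ncard) :
    n * Fintype.card ι ≤ S.ncard := by
  classical
  have := Fintype.ofFinite α
  rw [Set.ncard_eq_toFinset_card']
  refine Finset.mul_card_image_le_card_of_maps_to (f := π) (fun _ _ => Finset.mem_univ _) n
    fun i _ => ?_
  convert h i using 1
  rw [Set.ncard_eq_toFinset_card']
  congr 1
  ext
  simp

namespace DiamondNecklace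

open SimpleGraph

variable {k m : ℕ}

theorem neighborSet_c (i : Fin k) :
    (diamondNecklace k).neighborSet (i, 2) = {(i, 0), (i, 1), (i, 3)} := by
  ext ⟨j, t⟩
  simp only [mem_neighborSet, diamondNecklace, fromRel_adj]
  fin_cases t <;> simp [eq_comm]

theorem neighborSet_d (i : Fin k) :
    (diamondNecklace k).neighborSet (i, 3) = {(i, 0), (i, 1), (i, 2)} := by
  ext ⟨j, t⟩
  simp only [mem_neighborSet, diamondNecklace, fromRel_adj]
  fin_cases t <;> simp [eq_comm]

theorem val_eq_val_add_one_mod_iff (i j : Fin (m + 2)) :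
    (j : ℕ) = ((i : ℕ) + 1) % (m + 2) ↔ j = i + 1 := by
  simp [Fin.ext_iff, Fin.val_add]

theorem neighborSet_a (i : Fin (m + 2)) :
    (diamondNecklace (m + 2)).neighborSet (i, 0) = {(i, 2), (i, 3), (i + 1, 1)} := by
  ext ⟨j, t⟩
  simp only [mem_neighborSet, diamondNecklace, fromRel_adj, val_eq_val_add_one_mod_iff]
  fin_cases t <;> simp [eq_comm]

theorem neighborSet_b (i : Fin (m + 2)) :
    (diamondNecklace (m + 2)).neighborSet (i + 1, 1) =
      {(i + 1, 2), (i + 1, 3), (i, 0)} := by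
  ext ⟨j, t⟩
  simp only [mem_neighborSet, diamondNecklace, fromRel_adj, val_eq_val_add_one_mod_iff]
  fin_cases t <;> simp [eq_comm]

theorem adj_c_iff_adj_d (i : Fin k) (x : Fin k × Fin 4) (hc : x ≠ (i, 2)) (hd : x ≠ (i, 3)) :
    (diamondNecklace k).Adj x (i, 2) ↔ (diamondNecklace k).Adj x (i, 3) := by
  rw [adj_comm, ← mem_neighborSet, neighborSet_c, adj_comm, ← mem_neighborSet, neighborSet_d]
  simp [hc, hd]

theorem fst_eq_of_adj_c_or_d {i : Fin k} {t : Fin 4} (ht : t = 2 ∨ t = 3) {y : Fin k × Fin 4}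
    (hy : (diamondNecklace k).Adj (i, t) y) : y.1 = i := by
  rw [← mem_neighborSet] at hy
  rcases ht with rfl | rfl
  · rw [neighborSet_c] at hy
    rcases hy with rfl | rfl | rfl <;> rfl
  · rw [neighborSet_d] at hy
    rcases hy with rfl | rfl | rfl <;> rfl

theorem two_le_ncard_inter_diamond {S : Set (Fin k × Fin 4)}
    (hS : IsTotalForcingSet (diamondNecklace k) S) (i : Fin k) :
    2 ≤ (S ∩ Prod.fst ⁻¹' {i}).ncard := by
  obtain ⟨t, ht, hS_it⟩ : ∃ t : Fin 4, (t = 2 ∨ t = 3) ∧ (i, t) ∈ S := by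
    rcases hS.1.mem_or_mem_of_twins (by simp) (adj_c_iff_adj_d i) with h | h
    exacts [⟨2, .inl rfl, h⟩, ⟨3, .inr rfl, h⟩]
  obtain ⟨y, hyS, hy⟩ := hS.2 _ hS_it
  exact (Set.one_lt_ncard_iff).mpr
    ⟨_, y, ⟨hS_it, rfl⟩, ⟨hyS, fst_eq_of_adj_c_or_d ht hy⟩, hy.ne⟩

variable {T : Set (Fin (m + 2) × Fin 4)}

theorem mem_d_succ (hT : ForcingClosed (diamondNecklace (m + 2)) T) (hc : ∀ i, (i, 2) ∈ T)
    {i : Fin (m + 2)} (ha : (i, 0) ∈ T) (hb : (i + 1, 1) ∈ T) : (i + 1, 3) ∈ T :=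
  hT.mem_of_neighborSet_subset hb (by simp [← mem_neighborSet, neighborSet_b])
    (by simp [neighborSet_b, Set.insert_subset_iff, ha, hc])

theorem mem_a (hT : ForcingClosed (diamondNecklace (m + 2)) T) (hc : ∀ i, (i, 2) ∈ T)
    {i : Fin (m + 2)} (hb : (i, 1) ∈ T) (hd : (i, 3) ∈ T) : (i, 0) ∈ T :=
  hT.mem_of_neighborSet_subset (hc i) (by simp [← mem_neighborSet, neighborSet_c])
    (by simp [neighborSet_c, Set.insert_subset_iff, hb, hd])

theorem mem_b_succ (hT : ForcingClosed (diamondNecklace (m + 2)) T) (hc : ∀ i, (i, 2) ∈ T)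
    {i : Fin (m + 2)} (ha : (i, 0) ∈ T) (hd : (i, 3) ∈ T) : (i + 1, 1) ∈ T :=
  hT.mem_of_neighborSet_subset ha (by simp [← mem_neighborSet, neighborSet_a])
    (by simp [neighborSet_a, Set.insert_subset_iff, hd, hc])

theorem mem_a_succ_and_mem_b_succ_succ (hT : ForcingClosed (diamondNecklace (m + 2)) T)
    (hc : ∀ i, (i, 2) ∈ T) {i : Fin (m + 2)} (ha : (i, 0) ∈ T) (hb : (i + 1, 1) ∈ T) :
    (i + 1, 0) ∈ T ∧ (i + 1 + 1, 1) ∈ T := by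
  have hd := mem_d_succ hT hc ha hb
  have ha' := mem_a hT hc hb hd
  exact ⟨ha', mem_b_succ hT hc ha' hd⟩

def partner (i : Fin (m + 2)) : Fin 4 := if i = 0 then 0 else if i = 1 then 1 else 3

theorem partner_ne_two (i : Fin (m + 2)) : partner i ≠ 2 := by
  unfold partner
  split_ifs <;> decide

theorem adj_c_partner (i : Fin (m + 2)) :
    (diamondNecklace (m + 2)).Adj (i, 2) (i, partner i) := by
  rw [← mem_neighborSet, neighborSet_c]
  unfold partner
  split_ifs <;> simp

variable (m) in
def totalForcingSet : Set (Fin (m + 2) × Fin 4) :=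
  Set.range (fun i => (i, 2)) ∪ Set.range (fun i => (i, partner i))

theorem ncard_totalForcingSet : (totalForcingSet m).ncard = 2 * (m + 2) := by
  have hdisj : Disjoint (Set.range fun i : Fin (m + 2) => (i, (2 : Fin 4)))
      (Set.range fun i => (i, partner i)) := by
    rw [Set.disjoint_left]
    rintro _ ⟨i, rfl⟩ ⟨j, hj⟩
    exact partner_ne_two j (Prod.ext_iff.mp hj).2
  have hinj (f : Fin (m + 2) → Fin 4) : Function.Injective fun i => (i, f i) :=
    fun i j h => (Prod.ext_iff.mp h).1
  rw [totalForcingSet, Set.ncard_union_eq hdisj, Set.ncard_range_of_injective (hinj _),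
    Set.ncard_range_of_injective (hinj _), Nat.card_eq_fintype_card, Fintype.card_fin]
  ring

theorem isForcingSet_totalForcingSet :
    IsForcingSet (diamondNecklace (m + 2)) (totalForcingSet m) := by
  intro T hST hT
  have hc i : (i, 2) ∈ T := hST (.inl ⟨i, rfl⟩)
  have ha₀ : (0, 0) ∈ T := hST (.inr ⟨0, by simp [partner]⟩)
  have hb₁ : (0 + 1, 1) ∈ T := hST (.inr ⟨1, by simp [partner]⟩)
  have hab (i : Fin (m + 2)) : (i, 0) ∈ T ∧ (i + 1, 1) ∈ T := by
    induction i using Fin.induction with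
    | zero => exact ⟨ha₀, hb₁⟩
    | succ i ih =>
      rw [← Fin.coeSucc_eq_succ]
      exact mem_a_succ_and_mem_b_succ_succ hT hc ih.1 ih.2
  have ha i : (i, 0) ∈ T := (hab i).1
  have hb i : (i, 1) ∈ T := by simpa using (hab (i - 1)).2
  rintro ⟨i, t⟩
  fin_cases t
  · exact ha i
  · exact hb i
  · exact hc i
  · simpa using mem_d_succ hT hc (ha (i - 1)) (by simpa using hb i)

theorem isTotalForcingSet_totalForcingSet :
    IsTotalForcingSet (diamondNecklace (m + 2)) (totalForcingSet m) := by
  refine ⟨isForcingSet_totalForcingSet, ?_⟩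
  rintro _ (⟨i, rfl⟩ | ⟨i, rfl⟩)
  · exact ⟨_, .inr ⟨i, rfl⟩, adj_c_partner i⟩
  · exact ⟨_, .inl ⟨i, rfl⟩, (adj_c_partner i).symm⟩

end DiamondNecklace

/-- For every `k ≥ 2`, the diamond-necklace `N_k` has order `n = 4k` and satisfies
`F_t(N_k) = 2k = n/2`. -/
theorem totalForcingNumber_diamondNecklace (k : ℕ) (hk : 2 ≤ k) :
    Fintype.card (Fin k × Fin 4) = 4 * k ∧
    totalForcingNumber (diamondNecklace k) = 2 * k := by
  obtain ⟨m, rfl⟩ := Nat.exists_eq_add_of_le' hk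
  refine ⟨by simp [mul_comm], ?_⟩
  rw [← DiamondNecklace.ncard_totalForcingSet]
  refine totalForcingNumber_eq DiamondNecklace.isTotalForcingSet_totalForcingSet fun S hS => ?_
  rw [DiamondNecklace.ncard_totalForcingSet]
  simpa using Set.mul_card_le_ncard_of_le_ncard_fiber Prod.fst 2
    (DiamondNecklace.two_le_ncard_inter_diamond hS)
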